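/- Every 2t-pfaffian f = [u_1,...,u_{2t}] with a ≤ u_1 < ... < u_{2t} ≤ b and not involving both indices a and b simultaneously lies in the ideal generated by the 2(t−1)-pfaffians of the submatrix X' on rows and columns a+1,...,b−1. That is, I_{2t}(X^{(1)}) + I_{2t}(X^{(2)}) ⊆ I_{2(t−1)}(X'), where X^{(1)} is the submatrix on rows/columns a,...,b−1 and X^{(2)} the submatrix on rows/columns a+1,...,b. -/

import Mathlib

open Matrix MvPolynomial

noncomputable def pf {R : Type*} [CommRing R] : (m : ℕ) → Matrix (Fin m) (Fin m) R → R
  | 0, _ => 1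
  | 1, _ => 0
  | (m+2), A => ∑ j : Fin (m+1), (-1:R)^(j:ℕ) * A 0 j.succ *
      pf m (A.submatrix (fun i => Fin.succ (j.succAbove i)) (fun i => Fin.succ (j.succAbove i)))

noncomputable def pfS {R : Type*} [CommRing R] {n : ℕ} (A : Matrix (Fin n) (Fin n) R)
    (s : Finset (Fin n)) : R :=
  pf s.card (A.submatrix (s.orderEmbOfFin rfl) (s.orderEmbOfFin rfl))

abbrev SkewVars (n : ℕ) := {p : Fin n × Fin n // p.1 < p.2}

noncomputable def genSkew (K : Type*) [Field K] (n : ℕ) :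
    Matrix (Fin n) (Fin n) (MvPolynomial (SkewVars n) K) :=
  fun i j => if h : i < j then X ⟨(i,j), h⟩ else if h' : j < i then - X ⟨(j,i), h'⟩ else 0

noncomputable def blockPf (K : Type*) [Field K] (n t a b : ℕ) :
    Ideal (MvPolynomial (SkewVars n) K) :=
  Ideal.span {f | ∃ s : Finset (Fin n), s.card = 2*t ∧
    (∀ i ∈ s, a ≤ (i:ℕ) ∧ (i:ℕ) ≤ b) ∧ f = pfS (genSkew K n) s}



section Basic
variable {R : Type*} [CommRing R]

lemma succAbove_val {n : ℕ} (p : Fin (n+1)) (i : Fin n) :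
    (p.succAbove i : ℕ) = if (i:ℕ) < (p:ℕ) then (i:ℕ) else (i:ℕ)+1 := by
  rcases Nat.lt_or_ge (i:ℕ) (p:ℕ) with h | h
  · rw [Fin.succAbove_of_castSucc_lt _ _ (by simpa [Fin.lt_def] using h), if_pos h]; rfl
  · rw [Fin.succAbove_of_le_castSucc _ _ (by simpa [Fin.le_def] using h),
      if_neg (not_lt.2 h)]; rfl

lemma negOnePow_congr (x y : ℕ) (h : x % 2 = y % 2) : (-1:R)^x = (-1:R)^y := by
  conv_lhs => rw [← Nat.div_add_mod x 2]
  conv_rhs => rw [← Nat.div_add_mod y 2]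
  rw [pow_add, pow_add, pow_mul, pow_mul, neg_one_sq, one_pow, one_pow, h]

lemma pfS_eq {n : ℕ} (A : Matrix (Fin n) (Fin n) R) (s : Finset (Fin n)) {k : ℕ}
    (h : s.card = k) :
    pfS A s = pf k (A.submatrix (s.orderEmbOfFin h) (s.orderEmbOfFin h)) := by
  subst h; rfl

lemma pf_submatrix_eq_pfS {n m : ℕ} (A : Matrix (Fin n) (Fin n) R) (s : Finset (Fin n))
    (h : s.card = m) (f : Fin m → Fin n) (hf : StrictMono f) (hfs : ∀ i, f i ∈ s) :
    pf m (A.submatrix f f) = pfS A s := by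
  rw [pfS_eq A s h, Finset.orderEmbOfFin_unique h hfs hf]

end Basic

section LastRow
variable {R : Type*} [CommRing R]

def dl {m : ℕ} (k : Fin (m+1)) : Fin m → Fin (m+2) := fun i => (k.succAbove i).castSucc

lemma pf_succ_succ (m : ℕ) (A : Matrix (Fin (m+2)) (Fin (m+2)) R) :
    pf (m+2) A = ∑ j : Fin (m+1), (-1:R)^(j:ℕ) * A 0 j.succ *
      pf m (A.submatrix (fun i => Fin.succ (j.succAbove i)) (fun i => Fin.succ (j.succAbove i))) := by
  rw [pf]



noncomputable def Tm (m : ℕ) (A : Matrix (Fin (m+4)) (Fin (m+4)) R) (a b : Fin (m+2)) : R :=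
  if a = b then 0 else
    (-1:R)^((a:ℕ)+(b:ℕ)+(if (a:ℕ)<(b:ℕ) then 1 else 0)+m) *
    A 0 a.succ.castSucc * A b.succ.castSucc (Fin.last (m+3)) *
    pfS A ({0, a.succ.castSucc, b.succ.castSucc, Fin.last (m+3)} : Finset (Fin (m+4)))ᶜ

lemma key_card (m : ℕ) (a b : Fin (m+2)) (hab : a ≠ b) :
    (({0, a.succ.castSucc, b.succ.castSucc, Fin.last (m+3)} : Finset (Fin (m+4)))ᶜ).card = m := by
  have ha := a.isLt; have hb := b.isLt
  have hab' : (a:ℕ) ≠ (b:ℕ) := fun h => hab (Fin.ext h)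
  rw [Finset.card_compl]
  have h4 : ({0, a.succ.castSucc, b.succ.castSucc, Fin.last (m+3)} : Finset (Fin (m+4))).card = 4 := by
    rw [Finset.card_insert_of_notMem, Finset.card_insert_of_notMem,
        Finset.card_insert_of_notMem, Finset.card_singleton]
    · simp only [Finset.mem_singleton, Fin.ext_iff, Fin.coe_castSucc, Fin.val_succ, Fin.val_last]
      omega
    · simp only [Finset.mem_insert, Finset.mem_singleton, Fin.ext_iff, Fin.coe_castSucc,
        Fin.val_succ, Fin.val_last]
      omega
    · simp only [Finset.mem_insert, Finset.mem_singleton, Fin.ext_iff, Fin.coe_castSucc,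
        Fin.val_succ, Fin.val_last, Fin.val_zero]
      omega
  rw [h4]
  simp

lemma emb1_mem (m : ℕ) (j : Fin (m+2)) (k : Fin (m+1)) (i : Fin m) :
    Fin.succ ((j.castSucc).succAbove ((k.succAbove i).castSucc)) ∈
      ({0, j.succ.castSucc, (j.succAbove k).succ.castSucc, Fin.last (m+3)} : Finset (Fin (m+4)))ᶜ := by
  have hi := i.isLt; have hk := k.isLt; have hj := j.isLt
  simp only [Finset.mem_compl, Finset.mem_insert, Finset.mem_singleton, not_or, Fin.ext_iff,
    Fin.val_succ, Fin.coe_castSucc, Fin.val_last, Fin.val_zero, succAbove_val]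
  split_ifs <;> (simp only [not_false_eq_true, true_and]; omega)

lemma emb2_mem (m : ℕ) (kh : Fin (m+2)) (j : Fin (m+1)) (i : Fin m) :
    ((kh.succ).succAbove (Fin.succ (j.succAbove i))).castSucc ∈
      ({0, (kh.succAbove j).succ.castSucc, kh.succ.castSucc, Fin.last (m+3)} : Finset (Fin (m+4)))ᶜ := by
  have hi := i.isLt; have hk := kh.isLt; have hj := j.isLt
  simp only [Finset.mem_compl, Finset.mem_insert, Finset.mem_singleton, not_or, Fin.ext_iff,
    Fin.val_succ, Fin.coe_castSucc, Fin.val_last, Fin.val_zero, succAbove_val]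
  split_ifs <;> (simp only [not_false_eq_true, true_and]; omega)
end LastRow

section LR2
variable {R : Type*} [CommRing R]

theorem pf_lastRow : ∀ (m : ℕ) (A : Matrix (Fin (m+2)) (Fin (m+2)) R),
    pf (m+2) A = ∑ k : Fin (m+1), (-1:R)^(m + (k:ℕ)) * A k.castSucc (Fin.last (m+1)) *
      pf m (A.submatrix (dl k) (dl k)) := by
  intro m
  induction m using Nat.twoStepInduction with
  | zero =>
      intro A
      rw [pf_succ_succ]
      simp [pf, Fin.last]
  | one =>
      intro A
      rw [pf_succ_succ]
      simp [pf]
  | more m IH _ =>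
      intro A
      have hdiag : ∀ a : Fin (m+2), Tm m A a a = 0 := fun a => if_pos rfl
      have c1 : ∀ j : Fin (m+2),
          (-1:R)^((j.castSucc : Fin (m+3)) : ℕ) * A 0 (j.castSucc).succ *
            pf (m+2) (A.submatrix (fun i => Fin.succ ((j.castSucc).succAbove i))
              (fun i => Fin.succ ((j.castSucc).succAbove i))) =
          ∑ k : Fin (m+1), Tm m A j (j.succAbove k) := by
        intro j
        have hj := j.isLt
        rw [IH, Finset.mul_sum]
        refine Finset.sum_congr rfl fun k _ => ?_
        have hk := k.isLt
        have hne : j ≠ j.succAbove k := Fin.ne_succAbove j k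
        rw [Matrix.submatrix_apply, Matrix.submatrix_submatrix, Tm, if_neg hne]
        have h1 : (j.castSucc).succ = j.succ.castSucc := (Fin.succ_castSucc j).symm
        have h2 : Fin.succ ((j.castSucc).succAbove (Fin.last (m+1))) =
            Fin.last (m+3) := by
          apply Fin.ext
          have hj' : ¬ ((m+1:ℕ) < (j:ℕ)) := by omega
          simp only [Fin.val_succ, succAbove_val, Fin.coe_castSucc, Fin.val_last, if_neg hj']
        have h3 : Fin.succ ((j.castSucc).succAbove (Fin.castSucc k)) =
            (j.succAbove k).succ.castSucc := by
          apply Fin.ext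
          simp only [Fin.val_succ, succAbove_val, Fin.coe_castSucc, Fin.val_last]
        have hpf : pf m (A.submatrix ((fun i => Fin.succ ((j.castSucc).succAbove i)) ∘ dl k)
            ((fun i => Fin.succ ((j.castSucc).succAbove i)) ∘ dl k)) =
            pfS A (({0, j.succ.castSucc, (j.succAbove k).succ.castSucc,
              Fin.last (m+3)} : Finset (Fin (m+4)))ᶜ) := by
          apply pf_submatrix_eq_pfS A _ (key_card m j (j.succAbove k) hne)
          · intro x y h
            exact Fin.strictMono_succ ((Fin.strictMono_succAbove _)
              (Fin.strictMono_castSucc ((Fin.strictMono_succAbove _) h)))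
          · intro i
            exact emb1_mem m j k i
        have hsign : (-1:R)^((j.castSucc : Fin (m+3)):ℕ) * (-1:R)^(m+(k:ℕ)) =
            (-1:R)^((j:ℕ)+((j.succAbove k):ℕ)+
              (if (j:ℕ)<((j.succAbove k):ℕ) then 1 else 0)+m) := by
          rw [← pow_add]
          apply negOnePow_congr
          have hb := succAbove_val j k
          simp only [Fin.coe_castSucc]
          rw [hb]
          split_ifs <;> omega
        rw [h1, h2, h3, hpf]
        calc (-1:R)^((j.castSucc : Fin (m+3)):ℕ) * A 0 j.succ.castSucc *
              ((-1:R)^(m+(k:ℕ)) * A ((j.succAbove k).succ.castSucc) (Fin.last (m+3)) *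
                pfS A (({0, j.succ.castSucc, (j.succAbove k).succ.castSucc,
                  Fin.last (m+3)} : Finset (Fin (m+4)))ᶜ))
            = ((-1:R)^((j.castSucc : Fin (m+3)):ℕ) * (-1:R)^(m+(k:ℕ))) *
              (A 0 j.succ.castSucc * (A ((j.succAbove k).succ.castSucc) (Fin.last (m+3)) *
                pfS A _)) := by ring
          _ = _ := by rw [hsign]; ring
      have c2 : ∀ kh : Fin (m+2),
          (-1:R)^((m+2)+((kh.succ : Fin (m+3)):ℕ)) * A (kh.succ).castSucc (Fin.last (m+3)) *
            pf (m+2) (A.submatrix (dl kh.succ) (dl kh.succ)) =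
          ∑ j' : Fin (m+1), Tm m A (kh.succAbove j') kh := by
        intro kh
        have hkh := kh.isLt
        rw [pf_succ_succ, Finset.mul_sum]
        refine Finset.sum_congr rfl fun j' _ => ?_
        have hj' := j'.isLt
        have hne : kh.succAbove j' ≠ kh := Fin.succAbove_ne kh j'
        rw [Matrix.submatrix_apply, Matrix.submatrix_submatrix, Tm, if_neg hne]
        have h1 : dl (kh.succ) (0 : Fin (m+2)) = 0 := by
          apply Fin.ext
          simp only [dl, Fin.coe_castSucc, succAbove_val, Fin.val_succ, Fin.val_zero]
          split_ifs <;> simp_all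
        have h2 : dl (kh.succ) (Fin.succ j') = (kh.succAbove j').succ.castSucc := by
          apply Fin.ext
          simp only [dl, Fin.coe_castSucc, succAbove_val, Fin.val_succ]
          split_ifs <;> omega
        have hpf : pf m (A.submatrix (dl kh.succ ∘ fun i => Fin.succ (j'.succAbove i))
            (dl kh.succ ∘ fun i => Fin.succ (j'.succAbove i))) =
            pfS A (({0, (kh.succAbove j').succ.castSucc, kh.succ.castSucc,
              Fin.last (m+3)} : Finset (Fin (m+4)))ᶜ) := by
          apply pf_submatrix_eq_pfS A _ (key_card m (kh.succAbove j') kh hne)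
          · intro x y h
            exact Fin.strictMono_castSucc ((Fin.strictMono_succAbove _)
              (Fin.strictMono_succ ((Fin.strictMono_succAbove _) h)))
          · intro i
            exact emb2_mem m kh j' i
        have hsign : (-1:R)^((m+2)+((kh.succ : Fin (m+3)):ℕ)) * (-1:R)^((j':ℕ)) =
            (-1:R)^(((kh.succAbove j'):ℕ)+(kh:ℕ)+
              (if ((kh.succAbove j'):ℕ)<(kh:ℕ) then 1 else 0)+m) := by
          rw [← pow_add]
          apply negOnePow_congr
          have hb := succAbove_val kh j'
          simp only [Fin.val_succ]
          rw [hb]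
          split_ifs <;> omega
        rw [h1, h2, hpf]
        calc (-1:R)^((m+2)+((kh.succ : Fin (m+3)):ℕ)) * A (kh.succ).castSucc (Fin.last (m+3)) *
              ((-1:R)^((j':ℕ)) * A 0 ((kh.succAbove j').succ.castSucc) *
                pfS A (({0, (kh.succAbove j').succ.castSucc, kh.succ.castSucc,
                  Fin.last (m+3)} : Finset (Fin (m+4)))ᶜ))
            = ((-1:R)^((m+2)+((kh.succ : Fin (m+3)):ℕ)) * (-1:R)^((j':ℕ))) *
              (A (kh.succ).castSucc (Fin.last (m+3)) * (A 0 ((kh.succAbove j').succ.castSucc) *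
                pfS A _)) := by ring
          _ = _ := by rw [hsign]; ring
      -- assembly
      rw [pf_succ_succ]

      rw [Fin.sum_univ_castSucc (n := m+2)]
      conv_rhs => rw [Fin.sum_univ_succ]
      have hmid : ∑ j : Fin (m+2), ∑ k : Fin (m+1), Tm m A j (j.succAbove k) =
          ∑ kh : Fin (m+2), ∑ j' : Fin (m+1), Tm m A (kh.succAbove j') kh := by
        have l1 : ∀ j : Fin (m+2), ∑ k : Fin (m+1), Tm m A j (j.succAbove k) =
            ∑ b : Fin (m+2), Tm m A j b := by
          intro j
          conv_rhs => rw [Fin.sum_univ_succAbove (fun b => Tm m A j b) j]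
          simp [hdiag]
        have l2 : ∀ kh : Fin (m+2), ∑ j' : Fin (m+1), Tm m A (kh.succAbove j') kh =
            ∑ a : Fin (m+2), Tm m A a kh := by
          intro kh
          conv_rhs => rw [Fin.sum_univ_succAbove (fun a => Tm m A a kh) kh]
          simp [hdiag]
        simp only [l1, l2]
        exact Finset.sum_comm
      have hlast : (-1:R)^(((Fin.last (m+2)) : ℕ)) * A 0 (Fin.last (m+2)).succ *
          pf (m+2) (A.submatrix (fun i => Fin.succ ((Fin.last (m+2)).succAbove i))
            (fun i => Fin.succ ((Fin.last (m+2)).succAbove i))) =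
          (-1:R)^((m+2)+(((0 : Fin (m+3))):ℕ)) * A (0 : Fin (m+3)).castSucc (Fin.last (m+3)) *
            pf (m+2) (A.submatrix (dl (0 : Fin (m+3))) (dl (0 : Fin (m+3)))) := by
        have hfun : (fun i : Fin (m+2) => Fin.succ ((Fin.last (m+2)).succAbove i)) =
            dl (0 : Fin (m+3)) := by
          funext i
          simp [dl, Fin.succ_castSucc, -Fin.castSucc_succ]
        rw [hfun]
        simp [Fin.succ_last]
      have hL : ∑ i : Fin (m + 2),
          (-1:R) ^ (i.castSucc:ℕ) * A 0 i.castSucc.succ *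
            pf (m + 2) (A.submatrix (fun i_1 => (i.castSucc.succAbove i_1).succ)
              fun i_1 => (i.castSucc.succAbove i_1).succ) =
          ∑ j : Fin (m+2), ∑ k : Fin (m+1), Tm m A j (j.succAbove k) :=
        Finset.sum_congr rfl fun j _ => c1 j
      have hR : ∑ i : Fin (m + 2),
          (-1:R) ^ (m + 2 + (i.succ:ℕ)) * A i.succ.castSucc (Fin.last (m + 2 + 1)) *
            pf (m + 2) (A.submatrix (dl i.succ) (dl i.succ)) =
          ∑ kh : Fin (m+2), ∑ j' : Fin (m+1), Tm m A (kh.succAbove j') kh :=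
        Finset.sum_congr rfl fun kh _ => c2 kh
      rw [hL, hmid, hlast, hR]
      exact add_comm _ _

end LR2

section Exp
variable {R : Type*} [CommRing R] {n : ℕ}

lemma pfS_minExpansion (A : Matrix (Fin n) (Fin n) R) (s : Finset (Fin n)) {m : ℕ}
    (h : s.card = m+2) :
    pfS A s = ∑ j : Fin (m+1), ((-1:R)^(j:ℕ) *
      A (s.orderEmbOfFin h 0) (s.orderEmbOfFin h j.succ)) *
      pfS A ((s.erase (s.orderEmbOfFin h 0)).erase (s.orderEmbOfFin h j.succ)) := by
  rw [pfS_eq A s h, pf_succ_succ]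
  refine Finset.sum_congr rfl fun j _ => ?_
  rw [Matrix.submatrix_apply, Matrix.submatrix_submatrix]
  congr 1
  set e := s.orderEmbOfFin h with he
  have hmem0 : e 0 ∈ s := Finset.orderEmbOfFin_mem s h 0
  have hmem1 : e j.succ ∈ s.erase (e 0) := by
    refine Finset.mem_erase.2 ⟨fun hcon => ?_, Finset.orderEmbOfFin_mem s h j.succ⟩
    exact (Fin.succ_ne_zero j) (e.injective hcon)
  have hcard : ((s.erase (e 0)).erase (e j.succ)).card = m := by
    rw [Finset.card_erase_of_mem hmem1, Finset.card_erase_of_mem hmem0, h]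
    omega
  apply pf_submatrix_eq_pfS A _ hcard
  · intro x y hxy
    exact e.strictMono (Fin.strictMono_succ ((Fin.strictMono_succAbove j) hxy))
  · intro i
    refine Finset.mem_erase.2 ⟨fun hcon => ?_, Finset.mem_erase.2
      ⟨fun hcon => ?_, Finset.orderEmbOfFin_mem s h _⟩⟩
    · exact Fin.succAbove_ne j i (Fin.succ_injective _ (e.injective hcon))
    · exact (Fin.succ_ne_zero _) (e.injective hcon)

lemma pfS_maxExpansion (A : Matrix (Fin n) (Fin n) R) (s : Finset (Fin n)) {m : ℕ}
    (h : s.card = m+2) :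
    pfS A s = ∑ k : Fin (m+1), ((-1:R)^(m+(k:ℕ)) *
      A (s.orderEmbOfFin h k.castSucc) (s.orderEmbOfFin h (Fin.last (m+1)))) *
      pfS A ((s.erase (s.orderEmbOfFin h (Fin.last (m+1)))).erase
        (s.orderEmbOfFin h k.castSucc)) := by
  rw [pfS_eq A s h, pf_lastRow m]
  refine Finset.sum_congr rfl fun k _ => ?_
  rw [Matrix.submatrix_apply, Matrix.submatrix_submatrix]
  congr 1
  set e := s.orderEmbOfFin h with he
  have hmeml : e (Fin.last (m+1)) ∈ s := Finset.orderEmbOfFin_mem s h _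
  have hmem1 : e k.castSucc ∈ s.erase (e (Fin.last (m+1))) := by
    refine Finset.mem_erase.2 ⟨fun hcon => ?_, Finset.orderEmbOfFin_mem s h _⟩
    exact (Fin.castSucc_lt_last k).ne (e.injective hcon)
  have hcard : ((s.erase (e (Fin.last (m+1)))).erase (e k.castSucc)).card = m := by
    rw [Finset.card_erase_of_mem hmem1, Finset.card_erase_of_mem hmeml, h]
    omega
  apply pf_submatrix_eq_pfS A _ hcard
  · intro x y hxy
    exact e.strictMono (Fin.strictMono_castSucc ((Fin.strictMono_succAbove k) hxy))
  · intro i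
    refine Finset.mem_erase.2 ⟨fun hcon => ?_, Finset.mem_erase.2
      ⟨fun hcon => ?_, Finset.orderEmbOfFin_mem s h _⟩⟩
    · exact Fin.succAbove_ne k i (Fin.castSucc_injective _ (e.injective hcon))
    · exact (Fin.castSucc_lt_last _).ne (e.injective hcon)

end Exp

/-- with `X⁽¹⁾` the block on rows/columns `a,…,b−1`, `X⁽²⁾` the block on
rows/columns `a+1,…,b`, and `X'` the block on rows/columns `a+1,…,b−1`, one has
`I_{2t}(X⁽¹⁾) + I_{2t}(X⁽²⁾) ⊆ I_{2(t−1)}(X')`. -/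
theorem pfaffian_ideal_two_blocks_le (K : Type*) [Field K]
    (n t a b : ℕ) (hn : b < n) (hab : a < b) (ht : 2 ≤ t) (hsize : a + 2 * t ≤ b + 1) :
    blockPf K n t a (b - 1) + blockPf K n t (a + 1) b ≤ blockPf K n (t - 1) (a + 1) (b - 1) := by
  rw [Submodule.add_eq_sup]
  refine sup_le ?_ ?_
  · rw [blockPf, Ideal.span_le]
    rintro f ⟨s, hcard, hbd, rfl⟩
    have hc : s.card = (2*t-2)+2 := by omega
    set e := s.orderEmbOfFin hc with he
    have hmem0 : e 0 ∈ s := Finset.orderEmbOfFin_mem s hc 0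
    rw [SetLike.mem_coe, pfS_minExpansion (genSkew K n) s hc]
    refine Ideal.sum_mem _ fun j _ => Ideal.mul_mem_left _ _ (Ideal.subset_span ?_)
    have hmem1 : e j.succ ∈ s.erase (e 0) :=
      Finset.mem_erase.2 ⟨fun hcon => (Fin.succ_ne_zero j) (e.injective hcon),
        Finset.orderEmbOfFin_mem s hc j.succ⟩
    refine ⟨(s.erase (e 0)).erase (e j.succ), ?_, ?_, rfl⟩
    · rw [Finset.card_erase_of_mem hmem1, Finset.card_erase_of_mem hmem0, hc]
      omega
    · intro i hi
      have h1 := Finset.mem_erase.1 hi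
      have h2 := Finset.mem_erase.1 h1.2
      have hi2 := h2.1
      have hi3 := h2.2
      have hbdi := hbd i hi3
      refine ⟨?_, hbdi.2⟩
      rcases Nat.lt_or_ge (a:ℕ) (i:ℕ) with hlt | hge
      · omega
      · exfalso
        have hia : (i:ℕ) = a := le_antisymm hge hbdi.1
        have : i ∈ Set.range e := by
          rw [Finset.range_orderEmbOfFin]; exact hi3
        obtain ⟨r, hr⟩ := this
        have h0le : e 0 ≤ e r := e.monotone (Fin.zero_le r)
        have hbd0 := hbd (e 0) hmem0
        have : e 0 = i := by
          apply Fin.ext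
          rw [hr] at h0le
          omega
        exact hi2 this.symm
  · rw [blockPf, Ideal.span_le]
    rintro f ⟨s, hcard, hbd, rfl⟩
    have hc : s.card = (2*t-2)+2 := by omega
    set e := s.orderEmbOfFin hc with he
    have hmeml : e (Fin.last (2*t-2+1)) ∈ s := Finset.orderEmbOfFin_mem s hc _
    rw [SetLike.mem_coe, pfS_maxExpansion (genSkew K n) s hc]
    refine Ideal.sum_mem _ fun k _ => Ideal.mul_mem_left _ _ (Ideal.subset_span ?_)
    have hmem1 : e k.castSucc ∈ s.erase (e (Fin.last (2*t-2+1))) :=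
      Finset.mem_erase.2 ⟨fun hcon => (Fin.castSucc_lt_last k).ne (e.injective hcon),
        Finset.orderEmbOfFin_mem s hc _⟩
    refine ⟨(s.erase (e (Fin.last (2*t-2+1)))).erase (e k.castSucc), ?_, ?_, rfl⟩
    · rw [Finset.card_erase_of_mem hmem1, Finset.card_erase_of_mem hmeml, hc]
      omega
    · intro i hi
      have h1 := Finset.mem_erase.1 hi
      have h2 := Finset.mem_erase.1 h1.2
      have hi2 := h2.1
      have hi3 := h2.2
      have hbdi := hbd i hi3
      refine ⟨hbdi.1, ?_⟩
      rcases Nat.lt_or_ge (i:ℕ) (b:ℕ) with hlt | hge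
      · omega
      · exfalso
        have hib : (i:ℕ) = b := le_antisymm hbdi.2 hge
        have : i ∈ Set.range e := by
          rw [Finset.range_orderEmbOfFin]; exact hi3
        obtain ⟨r, hr⟩ := this
        have hlle : e r ≤ e (Fin.last (2*t-2+1)) := e.monotone (Fin.le_last r)
        have hbdl := hbd (e (Fin.last (2*t-2+1))) hmeml
        have : e (Fin.last (2*t-2+1)) = i := by
          apply Fin.ext
          rw [hr] at hlle
          omega
        exact hi2 this.symm
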